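/- (First H-optimality condition for (P)) Assume inf(P) = max(D_H), i.e., the dual optimal value is attained and equals inf(P), and let x̄ ∈ E ∩ dom f. Then the following are equivalent: (i) x̄ ∈ sol(P); (ii) for every (H, λ) ∈ sol(D_H), one has 0_{X*} ∈ ∂( f + Σ_{t∈H} λ_t f_t )(x̄) and λ_t f_t(x̄) = 0 for all t ∈ H; (iii) there exists (H, λ) ∈ sol(D_H) such that 0_{X*} ∈ ∂( f + Σ_{t∈H} λ_t f_t )(x̄) and λ_t f_t(x̄) = 0 for all t ∈ H. -/

import Mathlib

open Pointwise Filter Topology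

noncomputable section

section Defs

variable {T : Type*} {X : Type*} [AddCommGroup X] [Module ℝ X] [TopologicalSpace X]
  [IsTopologicalAddGroup X] [ContinuousSMul ℝ X] [LocallyConvexSpace ℝ X] [T2Space X]

/-- The epigraph of an extended-real-valued function, as a subset of `Z × ℝ`. -/
def epiSet {Z : Type*} (f : Z → EReal) : Set (Z × ℝ) := {p | f p.1 ≤ (p.2 : EReal)}

/-- `f : Z → ℝ ∪ {+∞}` is a proper convex function (never `⊥`, not identically `⊤`,
with convex epigraph). -/
def IsProperConvex {Z : Type*} [AddCommGroup Z] [Module ℝ Z] (f : Z → EReal) : Prop :=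
  (∀ x, f x ≠ ⊥) ∧ (∃ x, f x ≠ ⊤) ∧ Convex ℝ (epiSet f)

/-- Membership in `Γ(Z)`: proper convex and lower semicontinuous. -/
def InGamma {Z : Type*} [AddCommGroup Z] [Module ℝ Z] [TopologicalSpace Z] (f : Z → EReal) : Prop :=
  IsProperConvex f ∧ LowerSemicontinuous f

/-- The Lagrangian `f + ∑_{t ∈ H} λ_t f_t` (with the convention `0·(+∞) = 0`,
which holds for `EReal` multiplication). -/
def lagFn (f : X → EReal) (ft : T → X → EReal) (H : Finset T) (lam : T → ℝ) : X → EReal :=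
  fun x => f x + ∑ t ∈ H, (lam t : EReal) * ft t x

/-- The feasible set `E` of (P). -/
def feasSet (ft : T → X → EReal) : Set X := {x | ∀ t, ft t x ≤ 0}

/-- The optimal value `inf (P)`. -/
def primalVal (f : X → EReal) (ft : T → X → EReal) : EReal := ⨅ x ∈ feasSet ft, f x

/-- The optimal solution set `sol (P)`. -/
def solP (f : X → EReal) (ft : T → X → EReal) : Set X :=
  {x | x ∈ feasSet ft ∧ f x = primalVal f ft}

/-- The optimal value `sup (D_H)` of the `H`-dual problem. -/
def dualVal (f : X → EReal) (ft : T → X → EReal) (Hfam : Set (Finset T)) : EReal :=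
  ⨆ H ∈ Hfam, ⨆ lam ∈ {l : T → ℝ | ∀ t ∈ H, 0 ≤ l t}, ⨅ x : X, lagFn f ft H lam x

/-- The optimal value `sup (D)` of the classical Lagrangian-Haar dual, with
multipliers `λ ∈ ℝ_+^{(T)}` (finitely supported). -/
def dualHaar (f : X → EReal) (ft : T → X → EReal) : EReal :=
  ⨆ lam ∈ {l : T →₀ ℝ | ∀ t, 0 ≤ l t},
    ⨅ x : X, f x + ∑ t ∈ lam.support, ((lam t : ℝ) : EReal) * ft t x

/-- `sup (D_m)`: ordinary Lagrangian dual of the finite subproblem `(P_m)`. -/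
def dualValFin (f : X → EReal) (ft : ℕ → X → EReal) (m : ℕ) : EReal :=
  ⨆ lam ∈ {l : ℕ → ℝ | ∀ k ∈ Finset.range m, 0 ≤ l k},
    ⨅ x : X, f x + ∑ k ∈ Finset.range m, (lam k : EReal) * ft k x

/-- `inf (P_m)`: optimal value of the finite subproblem `(P_m)`. -/
def primalValFin (f : X → EReal) (ft : ℕ → X → EReal) (m : ℕ) : EReal :=
  ⨅ x ∈ {x : X | ∀ k ∈ Finset.range m, ft k x ≤ 0}, f x

/-- A family of finite subsets of `T` is covering if its union is all of `T`. -/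
def CoveringFam (Hfam : Set (Finset T)) : Prop := (⋃ H ∈ Hfam, (H : Set T)) = Set.univ

/-- A family of finite subsets of `T` is directed (by inclusion). -/
def DirectedFam (Hfam : Set (Finset T)) : Prop :=
  ∀ H ∈ Hfam, ∀ K ∈ Hfam, ∃ L ∈ Hfam, (H : Set T) ∪ (K : Set T) ⊆ (L : Set T)

/-- Legendre-Fenchel conjugate of `f : X → ℝ̄`, as a function on the dual `X*`
(with its weak* topology). -/
def conj (f : X → EReal) (p : WeakDual ℝ X) : EReal := ⨆ x : X, ((p x : EReal) - f x)

/-- Legendre-Fenchel conjugate of `g : X* → ℝ̄` w.r.t. the duality `⟨X*, X⟩`. -/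
def conjDual (g : WeakDual ℝ X → EReal) (x : X) : EReal :=
  ⨆ p : WeakDual ℝ X, ((p x : EReal) - g p)

/-- The function `φ_H := inf_{H ∈ 𝓗, λ ∈ ℝ_+^H} (f + ∑_{t ∈ H} λ_t f_t)^*`. -/
def phiVal (f : X → EReal) (ft : T → X → EReal) (Hfam : Set (Finset T))
    (p : WeakDual ℝ X) : EReal :=
  ⨅ H ∈ Hfam, ⨅ lam ∈ {l : T → ℝ | ∀ t ∈ H, 0 ≤ l t}, conj (lagFn f ft H lam) p

/-- Subdifferential at `a ∈ X*` of a function `g : X* → ℝ̄`, a subset of `X`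
(empty when `g a ∉ ℝ`). -/
def dualSubdiff (g : WeakDual ℝ X → EReal) (a : WeakDual ℝ X) : Set X :=
  {x | (g a ≠ ⊤ ∧ g a ≠ ⊥) ∧ ∀ q : WeakDual ℝ X, g a + (((q x - a x : ℝ)) : EReal) ≤ g q}

/-- Fenchel subdifferential of `g : X → ℝ̄` at `x̄ ∈ X`, a subset of `X*`. -/
def fenchelSubdiff (g : X → EReal) (xb : X) : Set (WeakDual ℝ X) :=
  {p | ∀ x, g xb + (((p x - p xb : ℝ)) : EReal) ≤ g x}

/-- The set `𝓐_H = ⋃_{H ∈ 𝓗, λ ∈ ℝ_+^H} epi (f + ∑_{t∈H} λ_t f_t)^* ⊆ X* × ℝ`. -/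
def AHset (f : X → EReal) (ft : T → X → EReal) (Hfam : Set (Finset T)) :
    Set (WeakDual ℝ X × ℝ) :=
  ⋃ H ∈ Hfam, ⋃ lam ∈ {l : T → ℝ | ∀ t ∈ H, 0 ≤ l t}, epiSet (conj (lagFn f ft H lam))

/-- `A` is closed convex regarding `B`: `cl (co A) ∩ B = A ∩ B`. -/
def ClosedConvexRegarding {Z : Type*} [AddCommGroup Z] [Module ℝ Z] [TopologicalSpace Z]
    (A B : Set Z) : Prop :=
  closure (convexHull ℝ A) ∩ B = A ∩ B

/-- Recession cone of a set. -/
def recCone {Z : Type*} [AddCommGroup Z] [SMul ℝ Z] (A : Set Z) : Set Z :=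
  {v | ∀ a ∈ A, ∀ r : ℝ, 0 ≤ r → a + r • v ∈ A}

/-- Recession function `h_∞`, defined through `epi h_∞ = (epi h)_∞`. -/
def recFn (h : X → EReal) (x : X) : EReal :=
  ⨅ r ∈ {r : ℝ | (x, r) ∈ recCone (epiSet h)}, (r : EReal)

/-- The recession cone `(P)_∞ = ∩_{t∈T} [(f_t)_∞ ≤ 0] ∩ [f_∞ ≤ 0]` of problem (P). -/
def PinfSet (f : X → EReal) (ft : T → X → EReal) : Set X :=
  {x | recFn f x ≤ 0 ∧ ∀ t, recFn (ft t) x ≤ 0}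

/-- A subset is a linear subspace. -/
def IsLinSubspace {Z : Type*} [AddCommGroup Z] [Module ℝ Z] (S : Set Z) : Prop :=
  ∃ V : Submodule ℝ Z, S = ↑V

/-- Negative polar cone `A^-` of a set `A ⊆ X*`. -/
def negPolar (A : Set (WeakDual ℝ X)) : Set X := {x | ∀ p ∈ A, p x ≤ 0}

/-- The convex cone generated by a set: `cone A = ℝ₊ (co A)`. -/
def coneGen {Z : Type*} [AddCommGroup Z] [Module ℝ Z] (A : Set Z) : Set Z :=
  {z | ∃ r : ℝ, 0 ≤ r ∧ ∃ a ∈ convexHull ℝ A, z = r • a}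

/-- A set is weakly compact: compact for the weak topology `σ(X, X*)`. -/
def WeaklyCompactSet (S : Set X) : Prop := IsCompact (toWeakSpace ℝ X '' S)

/-- A set is weakly locally compact: locally compact in the weak topology. -/
def WeaklyLocallyCompactSet (S : Set X) : Prop :=
  LocallyCompactSpace ↥(toWeakSpace ℝ X '' S)

/-- `h` is weakly inf-locally compact: every sublevel set `[h ≤ r]`, `r ∈ ℝ`,
is weakly locally compact. -/
def InfWeaklyLocallyCompact (h : X → EReal) : Prop :=
  ∀ r : ℝ, WeaklyLocallyCompactSet {x | h x ≤ (r : EReal)}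

/-- The Mackey topology `τ(X*, X)` on `X*`: the topology of uniform convergence on
convex balanced weakly compact subsets of `X`. -/
def mackeyTopology (X : Type*) [AddCommGroup X] [Module ℝ X] [TopologicalSpace X]
    [IsTopologicalAddGroup X] [ContinuousSMul ℝ X] [LocallyConvexSpace ℝ X] [T2Space X] :
    TopologicalSpace (WeakDual ℝ X) :=
  TopologicalSpace.induced
    (fun p => UniformOnFun.ofFun {K : Set X | Convex ℝ K ∧ Balanced ℝ K ∧ WeaklyCompactSet K}
      (fun x => p x))
    inferInstance

/-- Interior of `S` relative to `A` for the topology `τ`. -/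
def relIntIn {Z : Type*} (τ : TopologicalSpace Z) (A S : Set Z) : Set Z :=
  {z | z ∈ S ∧ ∃ U, τ.IsOpen U ∧ z ∈ U ∧ U ∩ A ⊆ S}

/-- `g : X* → ℝ̄` is `τ(X*,X)`-quasicontinuous: the affine hull of `dom g` is
Mackey-closed and of finite codimension, the Mackey relative interior of `dom g`
is non-empty, and the restriction of `g` to `aff (dom g)` is Mackey-continuous
on `ri (dom g)`. -/
def MackeyQuasicontinuous (g : WeakDual ℝ X → EReal) : Prop :=
  @IsClosed _ (mackeyTopology X)
    ((affineSpan ℝ {p : WeakDual ℝ X | g p ≠ ⊤}) : Set (WeakDual ℝ X)) ∧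
  FiniteDimensional ℝ (WeakDual ℝ X ⧸ (affineSpan ℝ {p : WeakDual ℝ X | g p ≠ ⊤}).direction) ∧
  (relIntIn (mackeyTopology X) ((affineSpan ℝ {p : WeakDual ℝ X | g p ≠ ⊤}) : Set (WeakDual ℝ X))
    {p : WeakDual ℝ X | g p ≠ ⊤}).Nonempty ∧
  ∀ p ∈ relIntIn (mackeyTopology X)
      ((affineSpan ℝ {p : WeakDual ℝ X | g p ≠ ⊤}) : Set (WeakDual ℝ X))
      {p : WeakDual ℝ X | g p ≠ ⊤},
    @ContinuousWithinAt _ _ (mackeyTopology X) _ g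
      ((affineSpan ℝ {p : WeakDual ℝ X | g p ≠ ⊤}) : Set (WeakDual ℝ X)) p

/-- The set `𝓚_H = ⋃_{H ∈ 𝓗} cone ({(a_t*, b_t) : t ∈ H} + {0} × ℝ₊)`. -/
def KHset (a : T → WeakDual ℝ X) (b : T → ℝ) (Hfam : Set (Finset T)) :
    Set (WeakDual ℝ X × ℝ) :=
  ⋃ H ∈ Hfam, coneGen ((fun t => (a t, b t)) '' (H : Set T) + ({0} ×ˢ Set.Ici (0 : ℝ)))

end Defs

/- For feasible `x̄` and `λ ≥ 0` on `H`, every term `λ_t f_t(x̄)` is `≤ 0`, so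
`min L ≤ L(x̄) ≤ f(x̄)` for the Lagrangian `L = f + ∑_{t∈H} λ_t f_t`. If `min L = inf (P)`, this chain
collapses exactly when `x̄` is optimal; collapsing means `0 ∈ ∂L(x̄)` together with `L(x̄) = f(x̄)`,
and as `f(x̄)` is finite and the terms are nonpositive, the latter is complementary slackness. -/

theorem EReal.eq_zero_of_add_eq_self {a s : EReal} (ha_top : a ≠ ⊤) (ha_bot : a ≠ ⊥)
    (h : a + s = a) : s = 0 := by
  lift a to ℝ using ⟨ha_top, ha_bot⟩
  rw [← EReal.add_sub_cancel_left (a := s) (b := a), h, ← EReal.coe_sub]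
  simp

theorem zero_mem_fenchelSubdiff_iff {X : Type*} [AddCommGroup X] [Module ℝ X]
    [TopologicalSpace X] {g : X → EReal} {x : X} :
    (0 : WeakDual ℝ X) ∈ fenchelSubdiff g x ↔ ∀ y, g x ≤ g y := by
  change (∀ y, g x + ((0 - 0 : ℝ) : EReal) ≤ g y) ↔ _
  simp only [sub_self, EReal.coe_zero, add_zero]

section Lagrangian

variable {T : Type*} {X : Type*} {f : X → EReal} {ft : T → X → EReal} {H : Finset T}
  {lam : T → ℝ} {x : X}

theorem multiplier_term_nonpos (hx : x ∈ feasSet ft) (hlam : ∀ t ∈ H, 0 ≤ lam t) :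
    ∀ t ∈ H, (lam t : EReal) * ft t x ≤ 0 := fun t ht =>
  mul_nonpos_of_nonneg_of_nonpos (EReal.coe_nonneg.2 (hlam t ht)) (hx t)

theorem lagFn_le_of_mem_feasSet (hx : x ∈ feasSet ft) (hlam : ∀ t ∈ H, 0 ≤ lam t) :
    lagFn f ft H lam x ≤ f x :=
  calc lagFn f ft H lam x ≤ f x + 0 :=
        add_le_add_right (Finset.sum_nonpos (multiplier_term_nonpos hx hlam)) _
    _ = f x := add_zero _

theorem lagFn_eq_self_iff (hx : x ∈ feasSet ft) (hlam : ∀ t ∈ H, 0 ≤ lam t)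
    (hx_top : f x ≠ ⊤) (hx_bot : f x ≠ ⊥) :
    lagFn f ft H lam x = f x ↔ ∀ t ∈ H, (lam t : EReal) * ft t x = 0 := by
  rw [← Finset.sum_eq_zero_iff_of_nonpos (multiplier_term_nonpos hx hlam)]
  exact ⟨EReal.eq_zero_of_add_eq_self hx_top hx_bot, fun h => by rw [lagFn, h, add_zero]⟩

theorem primalVal_le (hx : x ∈ feasSet ft) : primalVal f ft ≤ f x := iInf₂_le x hx

theorem mem_solP_iff_of_iInf_lagFn_eq_primalVal [AddCommGroup X] [Module ℝ X]
    [TopologicalSpace X] (hlam : ∀ t ∈ H, 0 ≤ lam t)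
    (hopt : ⨅ y, lagFn f ft H lam y = primalVal f ft)
    (hx : x ∈ feasSet ft) (hx_top : f x ≠ ⊤) (hx_bot : f x ≠ ⊥) :
    x ∈ solP f ft ↔ (0 : WeakDual ℝ X) ∈ fenchelSubdiff (lagFn f ft H lam) x ∧
      ∀ t ∈ H, (lam t : EReal) * ft t x = 0 := by
  rw [zero_mem_fenchelSubdiff_iff, ← lagFn_eq_self_iff hx hlam hx_top hx_bot]
  constructor
  · rintro ⟨-, hsol⟩
    have hlag_ge : f x ≤ lagFn f ft H lam x := hsol ▸ hopt ▸ iInf_le _ x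
    have hlag_eq := le_antisymm (lagFn_le_of_mem_feasSet hx hlam) hlag_ge
    refine ⟨fun y => ?_, hlag_eq⟩
    calc lagFn f ft H lam x = primalVal f ft := hlag_eq.trans hsol
      _ = ⨅ y, lagFn f ft H lam y := hopt.symm
      _ ≤ lagFn f ft H lam y := iInf_le _ y
  · rintro ⟨hmin, hlag_eq⟩
    refine ⟨hx, le_antisymm ?_ (primalVal_le hx)⟩
    calc f x = lagFn f ft H lam x := hlag_eq.symm
      _ ≤ ⨅ y, lagFn f ft H lam y := le_iInf hmin
      _ = primalVal f ft := hopt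

end Lagrangian

theorem first_optimality_condition_general {T : Type*} {X : Type*} [AddCommGroup X] [Module ℝ X] [TopologicalSpace X]
    (f : X → EReal) (ft : T → X → EReal)
    (hf : IsProperConvex f)
    (Hfam : Set (Finset T))
    (hattain : ∃ H ∈ Hfam, ∃ lam : T → ℝ, (∀ t ∈ H, 0 ≤ lam t) ∧
      (⨅ x : X, lagFn f ft H lam x) = dualVal f ft Hfam)
    (hdual : primalVal f ft = dualVal f ft Hfam)
    (xb : X) (hfeas : xb ∈ feasSet ft) (hdom : f xb ≠ ⊤) :
    (xb ∈ solP f ft ↔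
      ∀ H ∈ Hfam, ∀ lam : T → ℝ, (∀ t ∈ H, 0 ≤ lam t) →
        (⨅ x : X, lagFn f ft H lam x) = dualVal f ft Hfam →
        ((0 : WeakDual ℝ X) ∈ fenchelSubdiff (lagFn f ft H lam) xb ∧
          ∀ t ∈ H, (lam t : EReal) * ft t xb = 0)) ∧
    (xb ∈ solP f ft ↔
      ∃ H ∈ Hfam, ∃ lam : T → ℝ, (∀ t ∈ H, 0 ≤ lam t) ∧
        (⨅ x : X, lagFn f ft H lam x) = dualVal f ft Hfam ∧
        (0 : WeakDual ℝ X) ∈ fenchelSubdiff (lagFn f ft H lam) xb ∧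
        ∀ t ∈ H, (lam t : EReal) * ft t xb = 0) := by
  have kkt_iff : ∀ H : Finset T, ∀ lam : T → ℝ, (∀ t ∈ H, 0 ≤ lam t) →
      (⨅ x : X, lagFn f ft H lam x) = dualVal f ft Hfam →
      (xb ∈ solP f ft ↔ (0 : WeakDual ℝ X) ∈ fenchelSubdiff (lagFn f ft H lam) xb ∧
        ∀ t ∈ H, (lam t : EReal) * ft t xb = 0) := fun H lam hlam hopt =>
    mem_solP_iff_of_iInf_lagFn_eq_primalVal hlam (hopt.trans hdual.symm) hfeas hdom (hf.1 xb)
  obtain ⟨H₀, hH₀, lam₀, hlam₀, hopt₀⟩ := hattain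
  constructor
  · exact ⟨fun hsol H _ lam hlam hopt => (kkt_iff H lam hlam hopt).1 hsol,
      fun hall => (kkt_iff H₀ lam₀ hlam₀ hopt₀).2 (hall H₀ hH₀ lam₀ hlam₀ hopt₀)⟩
  · exact ⟨fun hsol => ⟨H₀, hH₀, lam₀, hlam₀, hopt₀, (kkt_iff H₀ lam₀ hlam₀ hopt₀).1 hsol⟩,
      fun ⟨H, _, lam, hlam, hopt, hkkt⟩ => (kkt_iff H lam hlam hopt).2 hkkt⟩

/-- first `𝓗`-optimality condition for (P): if
`inf (P) = max (D_𝓗)` (dual value attained) and `x̄ ∈ E ∩ dom f`, then `x̄ ∈ sol (P)` iff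
the KKT-type condition holds for every dual solution `(H,λ)`, iff it holds for some
dual solution `(H,λ)`. -/
theorem first_optimality_condition {T : Type*} {X : Type*} [AddCommGroup X] [Module ℝ X] [TopologicalSpace X]
    [IsTopologicalAddGroup X] [ContinuousSMul ℝ X] [LocallyConvexSpace ℝ X] [T2Space X]
    (f : X → EReal) (ft : T → X → EReal)
    (hf : IsProperConvex f) (hft : ∀ t, IsProperConvex (ft t))
    (Hfam : Set (Finset T)) (hHne : Hfam.Nonempty) (hHmem : ∀ H ∈ Hfam, H.Nonempty)
    (hattain : ∃ H ∈ Hfam, ∃ lam : T → ℝ, (∀ t ∈ H, 0 ≤ lam t) ∧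
      (⨅ x : X, lagFn f ft H lam x) = dualVal f ft Hfam)
    (hdual : primalVal f ft = dualVal f ft Hfam)
    (xb : X) (hfeas : xb ∈ feasSet ft) (hdom : f xb ≠ ⊤) :
    (xb ∈ solP f ft ↔
      ∀ H ∈ Hfam, ∀ lam : T → ℝ, (∀ t ∈ H, 0 ≤ lam t) →
        (⨅ x : X, lagFn f ft H lam x) = dualVal f ft Hfam →
        ((0 : WeakDual ℝ X) ∈ fenchelSubdiff (lagFn f ft H lam) xb ∧
          ∀ t ∈ H, (lam t : EReal) * ft t xb = 0)) ∧
    (xb ∈ solP f ft ↔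
      ∃ H ∈ Hfam, ∃ lam : T → ℝ, (∀ t ∈ H, 0 ≤ lam t) ∧
        (⨅ x : X, lagFn f ft H lam x) = dualVal f ft Hfam ∧
        (0 : WeakDual ℝ X) ∈ fenchelSubdiff (lagFn f ft H lam) xb ∧
        ∀ t ∈ H, (lam t : EReal) * ft t xb = 0) :=
  first_optimality_condition_general f ft hf Hfam hattain hdual xb hfeas hdom

end
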